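/- arXiv:2105.11773 — 5 statements merged into one kernel-verified Lean document; each statement's English description precedes it below -/
import Mathlib

section
/- Let ℓ ≥ 0 be an integer and x₀ ∈ ℝ². Denote by P_ℓ the real vector space of polynomials in two variables of total degree at most ℓ (with the convention P_{−1} = {0}). Define the subspaces of P_ℓ × P_ℓ: R_ℓ := { (∂₂q, −∂₁q) : q ∈ P_{ℓ+1} } (rotated gradients) and R^c_ℓ := { ((X₁ − x₀₁) r, (X₂ − x₀₂) r) : r ∈ P_{ℓ−1} }. Then P_ℓ × P_ℓ is the internal direct sum of R_ℓ and R^c_ℓ, i.e. R_ℓ ∩ R^c_ℓ = {0} and R_ℓ + R^c_ℓ = P_ℓ × P_ℓ. -/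
/-!
The divergence of `((X₁ - x₀₁) r, (X₂ - x₀₂) r)` is `2 r + (X - x₀) · ∇r`; at a monomial of
maximal degree `k` of `r` its coefficient is `k + 2` times that of `r`. So `r ↦ div ((X - x₀) r)`
is injective, hence bijective on each finite-dimensional `P_k`. Rotated gradients are divergence
free, which gives `R_ℓ ∩ R^c_ℓ = 0`. Conversely, for `v ∈ P_ℓ × P_ℓ` pick `r ∈ P_{ℓ-1}` with
`div ((X - x₀) r) = div v`: then `v - (X - x₀) r` is divergence free, hence a rotated gradient by
the polynomial Poincaré lemma: a closed polynomial 1-form `F` is `dq` where `euler q = ∑ Xᵢ Fᵢ`.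
-/

open MvPolynomial

namespace MvPolynomial

section CommSemiring

variable {σ R : Type*} [CommSemiring R]

theorem coeff_X_mul_pderiv (i : σ) (m : σ →₀ ℕ) (p : MvPolynomial σ R) :
    coeff m (X i * pderiv i p) = m i * coeff m p := by
  classical
  induction p using MvPolynomial.induction_on' with
  | monomial s a =>
    rw [X_mul_pderiv_monomial, coeff_smul, coeff_monomial]
    split_ifs with h
    · simp [h, nsmul_eq_mul]
    · simp
  | add p q hp hq => simp only [map_add, mul_add, coeff_add, hp, hq]

theorem coeff_pderiv_eq_zero_of_totalDegree_le {i : σ} {p : MvPolynomial σ R} {m : σ →₀ ℕ}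
    (h : p.totalDegree ≤ m.degree) : coeff m (pderiv i p) = 0 := by
  rw [coeff_pderiv, coeff_eq_zero_of_totalDegree_lt, zero_mul]
  have : (m + Finsupp.single i 1).degree = m.degree + 1 := by
    rw [map_add, Finsupp.degree_single]
  rw [← Finsupp.degree_apply, this]
  omega

theorem totalDegree_pderiv_le (i : σ) (p : MvPolynomial σ R) :
    (pderiv i p).totalDegree ≤ p.totalDegree - 1 := by
  refine Finset.sup_le fun m hm => ?_
  have : ¬ p.totalDegree ≤ m.degree := fun h =>
    mem_support_iff.mp hm (coeff_pderiv_eq_zero_of_totalDegree_le h)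
  change m.degree ≤ _
  omega

theorem pderiv_comm (i j : σ) (p : MvPolynomial σ R) :
    pderiv i (pderiv j p) = pderiv j (pderiv i p) := by
  rcases eq_or_ne i j with rfl | hij
  · rfl
  ext m
  simp only [coeff_pderiv, add_right_comm m (Finsupp.single i 1), Finsupp.add_apply,
    Finsupp.single_eq_of_ne hij, Finsupp.single_eq_of_ne hij.symm, add_zero]
  ring

variable [Fintype σ]

noncomputable def euler (p : MvPolynomial σ R) : MvPolynomial σ R := ∑ i, X i * pderiv i p

theorem coeff_euler (m : σ →₀ ℕ) (p : MvPolynomial σ R) :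
    coeff m (euler p) = m.degree * coeff m p := by
  simp only [euler, coeff_sum, coeff_X_mul_pderiv, ← Finset.sum_mul, Finsupp.degree_eq_sum,
    Nat.cast_sum]

theorem pderiv_euler (i : σ) (p : MvPolynomial σ R) :
    pderiv i (euler p) = euler (pderiv i p) + pderiv i p := by
  ext m
  rw [coeff_add, coeff_euler, coeff_pderiv, coeff_pderiv, coeff_euler, map_add,
    Finsupp.degree_single]
  push_cast
  ring

end CommSemiring

section CommRing

variable {σ R : Type*} [CommRing R]

theorem totalDegree_X_sub_C_mul_le (i : σ) (c : R) (r : MvPolynomial σ R) :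
    ((X i - C c) * r).totalDegree ≤ r.totalDegree + 1 := by
  have : (X i - C c : MvPolynomial σ R).totalDegree ≤ 1 :=
    (totalDegree_sub _ _).trans <| max_le
      ((totalDegree_monomial_le _ _).trans_eq (Finsupp.sum_single_index rfl))
      ((totalDegree_C c).trans_le zero_le_one)
  exact (totalDegree_mul _ _).trans (by omega)

theorem totalDegree_X_sub_C_mul_le_of_lt {i : σ} {c : R} {r : MvPolynomial σ R} {ℓ : ℕ}
    (hr : r = 0 ∨ r.totalDegree < ℓ) : ((X i - C c) * r).totalDegree ≤ ℓ := by
  rcases hr with rfl | hr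
  · simp
  · have := totalDegree_X_sub_C_mul_le i c r
    omega

variable [Fintype σ]

noncomputable def divRadial (x₀ : σ → R) : MvPolynomial σ R →ₗ[R] MvPolynomial σ R :=
  ∑ i, (pderiv i).toLinearMap ∘ₗ LinearMap.mulLeft R (X i - C (x₀ i))

theorem divRadial_apply (x₀ : σ → R) (r : MvPolynomial σ R) :
    divRadial x₀ r = ∑ i, pderiv i ((X i - C (x₀ i)) * r) := by
  simp [divRadial, LinearMap.sum_apply]

theorem divRadial_eq (x₀ : σ → R) (r : MvPolynomial σ R) :
    divRadial x₀ r = Fintype.card σ • r + euler r - ∑ i, C (x₀ i) * pderiv i r := by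
  simp only [divRadial_apply, pderiv_mul, map_sub, pderiv_X_self, pderiv_C, one_mul,
    sub_mul, Finset.sum_add_distrib, Finset.sum_sub_distrib, Finset.sum_const, Finset.card_univ,
    euler]
  ring

theorem divRadial_fin_two (a b : R) (r : MvPolynomial (Fin 2) R) :
    divRadial ![a, b] r = pderiv 0 ((X 0 - C a) * r) + pderiv 1 ((X 1 - C b) * r) := by
  simp [divRadial_apply]

theorem totalDegree_divRadial_le (x₀ : σ → R) (r : MvPolynomial σ R) :
    (divRadial x₀ r).totalDegree ≤ r.totalDegree := by
  rw [divRadial_apply]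
  refine totalDegree_finsetSum_le fun i _ => (totalDegree_pderiv_le _ _).trans ?_
  have := totalDegree_X_sub_C_mul_le i (x₀ i) r
  omega

variable [IsDomain R] [CharZero R]

theorem euler_add_self_injective :
    Function.Injective fun p : MvPolynomial σ R => euler p + p := by
  intro p q h
  ext m
  have hm := congrArg (coeff m) h
  simp only [coeff_add, coeff_euler, ← add_one_mul] at hm
  exact mul_left_cancel₀ (Nat.cast_add_one_ne_zero _) hm

theorem divRadial_injective [Nonempty σ] (x₀ : σ → R) : Function.Injective (divRadial x₀) := by
  rw [← LinearMap.ker_eq_bot, LinearMap.ker_eq_bot']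
  intro r hr
  by_contra hr0
  obtain ⟨m, hm, hdeg⟩ :=
    Finset.exists_mem_eq_sup r.support (support_nonempty.mpr hr0) Finsupp.degree
  have hcoeff := congrArg (coeff m) hr
  rw [divRadial_eq, coeff_sub, coeff_add, coeff_smul, coeff_euler, coeff_sum,
    Finset.sum_eq_zero fun i _ => by
      rw [coeff_C_mul, coeff_pderiv_eq_zero_of_totalDegree_le hdeg.le, mul_zero],
    sub_zero, coeff_zero, nsmul_eq_mul, ← add_mul] at hcoeff
  refine mem_support_iff.mp hm ((mul_eq_zero.mp hcoeff).resolve_left ?_)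
  exact_mod_cast (Nat.add_pos_left Fintype.card_pos _).ne'

theorem eq_zero_of_pderiv_eq_X_sub_C_mul {q r : MvPolynomial (Fin 2) R} {a b : R}
    (h : (pderiv 1 q, -pderiv 0 q) = ((X 0 - C a) * r, (X 1 - C b) * r)) : r = 0 := by
  obtain ⟨h1, h2⟩ := Prod.mk.inj h
  refine divRadial_injective ![a, b] ?_
  rw [map_zero, divRadial_fin_two, ← h1, ← h2, map_neg, pderiv_comm, add_neg_cancel]

end CommRing

section Field

variable {σ K : Type*} [Fintype σ] [Field K] [CharZero K]

theorem exists_euler_eq {p : MvPolynomial σ K} (hp : coeff 0 p = 0) :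
    ∃ q : MvPolynomial σ K, q.totalDegree ≤ p.totalDegree ∧ euler q = p := by
  classical
  let q := ∑ m ∈ p.support, monomial m (coeff m p / m.degree)
  have hq : ∀ m, coeff m q = coeff m p / m.degree := fun m => by
    simp only [q, coeff_sum, coeff_monomial, Finset.sum_ite_eq']
    split_ifs with hm
    · rfl
    · rw [notMem_support_iff.mp hm, zero_div]
  refine ⟨q, totalDegree_finsetSum_le fun m hm => ?_, ?_⟩
  · exact (totalDegree_monomial_le _ _).trans (le_totalDegree hm)
  · ext m
    rw [coeff_euler, hq]
    rcases eq_or_ne m 0 with rfl | hm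
    · simp [hp] -- `coeff 0 q` is a junk division by `degree 0 = 0`; both sides vanish
    · have : (m.degree : K) ≠ 0 := by exact_mod_cast (Finsupp.degree_eq_zero_iff m).not.mpr hm
      field_simp

theorem exists_pderiv_eq_of_pderiv_comm (F : σ → MvPolynomial σ K) {n : ℕ}
    (hF : ∀ i, (F i).totalDegree ≤ n) (hclosed : ∀ i j, pderiv i (F j) = pderiv j (F i)) :
    ∃ q : MvPolynomial σ K, q.totalDegree ≤ n + 1 ∧ ∀ i, pderiv i q = F i := by
  classical
  let h := ∑ j, X j * F j
  have h0 : coeff 0 h = 0 := by simp [h, coeff_sum, coeff_X_mul']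
  have hdeg : h.totalDegree ≤ n + 1 := totalDegree_finsetSum_le fun j _ =>
    (totalDegree_mul _ _).trans (by rw [totalDegree_X, add_comm]; exact add_le_add_left (hF j) 1)
  obtain ⟨q, hq, hqh⟩ := exists_euler_eq h0
  refine ⟨q, hq.trans hdeg, fun i => euler_add_self_injective ?_⟩
  -- closedness turns `∂ᵢ (∑ⱼ Xⱼ Fⱼ)` into `Fᵢ + euler Fᵢ`
  calc euler (pderiv i q) + pderiv i q = pderiv i h := by rw [← pderiv_euler, hqh]
    _ = euler (F i) + F i := by
      simp only [h, map_sum, pderiv_mul, pderiv_X, Pi.single_apply, ite_mul, one_mul, zero_mul,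
        Finset.sum_add_distrib, Finset.sum_ite_eq', Finset.mem_univ, if_true, euler, hclosed i]
      ring

theorem exists_divRadial_eq [Nonempty σ] (x₀ : σ → K) {d : MvPolynomial σ K} {k : ℕ}
    (hd : d.totalDegree ≤ k) : ∃ r, r.totalDegree ≤ k ∧ divRadial x₀ r = d := by
  let L := (divRadial x₀).restrict (p := restrictTotalDegree σ K k)
    (q := restrictTotalDegree σ K k) fun r hr => by
      simp only [mem_restrictTotalDegree] at hr ⊢
      exact (totalDegree_divRadial_le x₀ r).trans hr
  have hL : Function.Surjective L := LinearMap.injective_iff_surjective.mp fun a b hab =>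
    Subtype.ext (divRadial_injective x₀ (congrArg Subtype.val hab))
  obtain ⟨⟨r, hr⟩, hrd⟩ := hL ⟨d, (mem_restrictTotalDegree σ k d).mpr hd⟩
  exact ⟨r, (mem_restrictTotalDegree σ k r).mp hr, congrArg Subtype.val hrd⟩

theorem exists_divRadial_eq_sum_pderiv [Nonempty σ] (x₀ : σ → K) (F : σ → MvPolynomial σ K)
    {ℓ : ℕ} (hF : ∀ i, (F i).totalDegree ≤ ℓ) :
    ∃ r, (r = 0 ∨ r.totalDegree < ℓ) ∧ divRadial x₀ r = ∑ i, pderiv i (F i) := by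
  cases ℓ with
  | zero =>
    refine ⟨0, Or.inl rfl, ?_⟩
    simp only [map_zero]
    refine (Finset.sum_eq_zero fun i _ => ?_).symm
    rw [totalDegree_eq_zero_iff_eq_C.mp (Nat.le_zero.mp (hF i)), pderiv_C]
  | succ k =>
    have hd : (∑ i, pderiv i (F i)).totalDegree ≤ k := totalDegree_finsetSum_le fun i _ =>
      (totalDegree_pderiv_le i (F i)).trans (by have := hF i; omega)
    obtain ⟨r, hr, hrd⟩ := exists_divRadial_eq x₀ hd
    exact ⟨r, Or.inr (Nat.lt_succ_of_le hr), hrd⟩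

end Field

section Plane

variable {K : Type*} [Field K] [CharZero K]

theorem exists_pderiv_one_eq_neg_pderiv_zero_eq {f g : MvPolynomial (Fin 2) K} {ℓ : ℕ}
    (hf : f.totalDegree ≤ ℓ) (hg : g.totalDegree ≤ ℓ) (hdiv : pderiv 0 f + pderiv 1 g = 0) :
    ∃ q : MvPolynomial (Fin 2) K, q.totalDegree ≤ ℓ + 1 ∧ (pderiv 1 q, -pderiv 0 q) = (f, g) := by
  have hclosed : pderiv 0 f = pderiv 1 (-g) := by rw [map_neg, eq_neg_of_add_eq_zero_left hdiv]
  obtain ⟨q, hq, hqF⟩ := exists_pderiv_eq_of_pderiv_comm ![-g, f] (n := ℓ)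
    (by simpa [Fin.forall_fin_two] using ⟨hg, hf⟩)
    (by simp [Fin.forall_fin_two, hclosed])
  exact ⟨q, hq, by simp [hqF 0, hqF 1]⟩

theorem exists_eq_pderiv_add_X_sub_C_mul {u w : MvPolynomial (Fin 2) K} {ℓ : ℕ}
    (hu : u.totalDegree ≤ ℓ) (hw : w.totalDegree ≤ ℓ) (a b : K) :
    ∃ q r : MvPolynomial (Fin 2) K, q.totalDegree ≤ ℓ + 1 ∧ (r = 0 ∨ r.totalDegree < ℓ) ∧
      (u, w) = (pderiv 1 q, -pderiv 0 q) + ((X 0 - C a) * r, (X 1 - C b) * r) := by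
  obtain ⟨r, hr, hdiv⟩ := exists_divRadial_eq_sum_pderiv ![a, b] ![u, w]
    (Fin.forall_fin_two.mpr ⟨hu, hw⟩)
  rw [divRadial_fin_two, Fin.sum_univ_two] at hdiv
  obtain ⟨q, hq, hqv⟩ := exists_pderiv_one_eq_neg_pderiv_zero_eq
    ((totalDegree_sub _ _).trans (max_le hu (totalDegree_X_sub_C_mul_le_of_lt hr)))
    ((totalDegree_sub _ _).trans (max_le hw (totalDegree_X_sub_C_mul_le_of_lt hr)))
    (by
      simp only [map_sub, Matrix.cons_val_zero, Matrix.cons_val_one] at hdiv ⊢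
      linear_combination -hdiv)
  refine ⟨q, r, hq, hr, ?_⟩
  rw [hqv, Prod.mk_add_mk, sub_add_cancel, sub_add_cancel]

end Plane

end MvPolynomial

/-- For `ℓ ≥ 0` and `x₀ ∈ ℝ²`, the space `P_ℓ × P_ℓ` of pairs of
bivariate real polynomials of total degree at most `ℓ` is the internal direct sum of
`R_ℓ = {(∂₂q, −∂₁q) : q ∈ P_{ℓ+1}}` (rotated gradients) and
`R^c_ℓ = {((X₁ − x₀₁) r, (X₂ − x₀₂) r) : r ∈ P_{ℓ−1}}` (with the convention `P_{−1} = {0}`,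
encoded by `r = 0 ∨ totalDegree r < ℓ`). -/
theorem stmt_0 (ℓ : ℕ) (x₀ : ℝ × ℝ) :
    let P2 : Set (MvPolynomial (Fin 2) ℝ × MvPolynomial (Fin 2) ℝ) :=
      {v | v.1.totalDegree ≤ ℓ ∧ v.2.totalDegree ≤ ℓ}
    let R : Set (MvPolynomial (Fin 2) ℝ × MvPolynomial (Fin 2) ℝ) :=
      {v | ∃ q : MvPolynomial (Fin 2) ℝ, q.totalDegree ≤ ℓ + 1 ∧
        v = (pderiv (1 : Fin 2) q, -(pderiv (0 : Fin 2) q))}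
    let Rc : Set (MvPolynomial (Fin 2) ℝ × MvPolynomial (Fin 2) ℝ) :=
      {v | ∃ r : MvPolynomial (Fin 2) ℝ, (r = 0 ∨ r.totalDegree < ℓ) ∧
        v = ((X 0 - C x₀.1) * r, (X 1 - C x₀.2) * r)}
    R ∩ Rc = {0} ∧ (∀ v, v ∈ P2 ↔ ∃ a ∈ R, ∃ b ∈ Rc, v = a + b) := by
  intro P2 R Rc
  refine ⟨Set.eq_singleton_iff_unique_mem.mpr ⟨?_, ?_⟩, fun ⟨u, w⟩ => ⟨?_, ?_⟩⟩
  · exact ⟨⟨0, by simp, by simp; rfl⟩, 0, Or.inl rfl, by simp; rfl⟩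
  · rintro _ ⟨⟨q, -, rfl⟩, r, -, hv⟩
    rw [hv, eq_zero_of_pderiv_eq_X_sub_C_mul hv, mul_zero, mul_zero]
    rfl
  · rintro ⟨hu, hw⟩
    obtain ⟨q, r, hq, hr, huw⟩ := exists_eq_pderiv_add_X_sub_C_mul hu hw x₀.1 x₀.2
    exact ⟨_, ⟨q, hq, rfl⟩, _, ⟨r, hr, rfl⟩, huw⟩
  · rintro ⟨_, ⟨q, hq, rfl⟩, _, ⟨r, hr, rfl⟩, huw⟩
    obtain ⟨rfl, rfl⟩ := Prod.mk.inj huw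
    have hpd : ∀ i, (pderiv i q).totalDegree ≤ ℓ := fun i =>
      (totalDegree_pderiv_le i q).trans (by omega)
    exact ⟨(totalDegree_add _ _).trans (max_le (hpd 1) (totalDegree_X_sub_C_mul_le_of_lt hr)),
      (totalDegree_add _ _).trans
        (max_le ((totalDegree_neg _).trans_le (hpd 0)) (totalDegree_X_sub_C_mul_le_of_lt hr))⟩
end

section
/- Let β₀, β₁, κ > 0 and t > 0. With V(y₁,y₂) = y₁ e^{−y₁} cos(y₂), g(x₁,x₂) = sin(πx₁) sin(πx₂), v_t(x) = t³ V(x/t) + g(x), w_t = −((β₀+β₁)/κ) Δ v_t, define u_t := v_t + t² w_t, θ_t := ∇ v_t, γ_t := (κ/t²)(∇ u_t − θ_t), and f_t := −div γ_t. Then the Reissner–Mindlin system holds at every x ∈ ℝ²: (i) γ_t = κ ∇ w_t; (ii) γ_t(x) + div(C ∇_s θ_t)(x) = 0, where C 𝐭 = β₀ 𝐭 + β₁ (tr 𝐭) I and div is the row-wise divergence; (iii) f_t(x) = (β₀ + β₁) Δ²g(x) = 4π⁴ (β₀ + β₁) g(x); in particular the transverse load f_t is independent of t. -/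
noncomputable section

open Real

/-- First partial derivative `∂₁` of a function on `ℝ²`. -/
def pd1 (f : ℝ × ℝ → ℝ) : ℝ × ℝ → ℝ := fun p => deriv (fun s => f (s, p.2)) p.1

/-- Second partial derivative `∂₂` of a function on `ℝ²`. -/
def pd2 (f : ℝ × ℝ → ℝ) : ℝ × ℝ → ℝ := fun p => deriv (fun s => f (p.1, s)) p.2

/-- Laplacian `Δ = ∂₁² + ∂₂²` on `ℝ²`. -/
def lap (f : ℝ × ℝ → ℝ) : ℝ × ℝ → ℝ := fun p => pd1 (pd1 f) p + pd2 (pd2 f) p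

/-- `V(y₁, y₂) = y₁ e^{−y₁} cos(y₂)`. -/
def V : ℝ × ℝ → ℝ := fun y => y.1 * Real.exp (-y.1) * Real.cos y.2

/-- `g(x₁, x₂) = sin(π x₁) sin(π x₂)`. -/
def g : ℝ × ℝ → ℝ := fun x => Real.sin (π * x.1) * Real.sin (π * x.2)

/-- `v_t(x) = t³ V(x/t) + g(x)`. -/
def vt (t : ℝ) : ℝ × ℝ → ℝ := fun x => t ^ 3 * V (x.1 / t, x.2 / t) + g x

/-- `w_t = −((β₀ + β₁)/κ) Δ v_t`. -/
def wt (β₀ β₁ κ t : ℝ) : ℝ × ℝ → ℝ := fun x => -((β₀ + β₁) / κ) * lap (vt t) x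

/-- Transverse displacement `u_t = v_t + t² w_t`. -/
def ut (β₀ β₁ κ t : ℝ) : ℝ × ℝ → ℝ := fun x => vt t x + t ^ 2 * wt β₀ β₁ κ t x

/-- First component of the rotation `θ_t = ∇ v_t`. -/
def θ1 (t : ℝ) : ℝ × ℝ → ℝ := pd1 (vt t)

/-- Second component of the rotation `θ_t = ∇ v_t`. -/
def θ2 (t : ℝ) : ℝ × ℝ → ℝ := pd2 (vt t)

/-- First component of `γ_t = (κ/t²)(∇ u_t − θ_t)`. -/
def gam1 (β₀ β₁ κ t : ℝ) : ℝ × ℝ → ℝ :=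
  fun x => κ / t ^ 2 * (pd1 (ut β₀ β₁ κ t) x - θ1 t x)

/-- Second component of `γ_t = (κ/t²)(∇ u_t − θ_t)`. -/
def gam2 (β₀ β₁ κ t : ℝ) : ℝ × ℝ → ℝ :=
  fun x => κ / t ^ 2 * (pd2 (ut β₀ β₁ κ t) x - θ2 t x)

/-- Transverse load `f_t = −div γ_t`. -/
def ft (β₀ β₁ κ t : ℝ) : ℝ × ℝ → ℝ :=
  fun x => -(pd1 (gam1 β₀ β₁ κ t) x + pd2 (gam2 β₀ β₁ κ t) x)

/-- Closed-form family closed under `pd1`/`pd2`. -/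
def Φ (t a b p q A B C D : ℝ) : ℝ × ℝ → ℝ := fun x =>
  (a + b * x.1) * Real.exp (-(x.1 / t)) * (p * Real.cos (x.2 / t) + q * Real.sin (x.2 / t)) +
    (A * Real.sin (π * x.1) + B * Real.cos (π * x.1)) *
      (C * Real.sin (π * x.2) + D * Real.cos (π * x.2))

lemma pd1_Φ {t a b p q A B C D a' b' A' B' : ℝ} (ht : t ≠ 0)
    (ha : a' = b - a / t) (hb : b' = -(b / t)) (hA : A' = -(π * B)) (hB : B' = π * A) :
    pd1 (Φ t a b p q A B C D) = Φ t a' b' p q A' B' C D := by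
  funext y
  have e1 : HasDerivAt (fun s : ℝ => a + b * s) b y.1 := by
    simpa using ((hasDerivAt_id y.1).const_mul b).const_add a
  have e2 : HasDerivAt (fun s : ℝ => Real.exp (-(s / t)))
      (Real.exp (-(y.1 / t)) * (-(1 / t))) y.1 := by
    simpa using (((hasDerivAt_id y.1).div_const t).neg).exp
  have e3 : HasDerivAt (fun s : ℝ => Real.sin (π * s)) (Real.cos (π * y.1) * π) y.1 := by
    simpa using ((hasDerivAt_id y.1).const_mul π).sin
  have e4 : HasDerivAt (fun s : ℝ => Real.cos (π * s)) (-Real.sin (π * y.1) * π) y.1 := by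
    simpa using ((hasDerivAt_id y.1).const_mul π).cos
  have h : HasDerivAt (fun s : ℝ =>
      (a + b * s) * Real.exp (-(s / t)) *
        (p * Real.cos (y.2 / t) + q * Real.sin (y.2 / t)) +
      (A * Real.sin (π * s) + B * Real.cos (π * s)) *
        (C * Real.sin (π * y.2) + D * Real.cos (π * y.2)))
      ((b * Real.exp (-(y.1 / t)) + (a + b * y.1) * (Real.exp (-(y.1 / t)) * (-(1 / t)))) *
        (p * Real.cos (y.2 / t) + q * Real.sin (y.2 / t)) +
       (A * (Real.cos (π * y.1) * π) + B * (-Real.sin (π * y.1) * π)) *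
        (C * Real.sin (π * y.2) + D * Real.cos (π * y.2))) y.1 :=
    ((e1.mul e2).mul_const _).add (((e3.const_mul A).add (e4.const_mul B)).mul_const _)
  simp only [pd1, Φ]
  rw [h.deriv]
  subst ha hb hA hB
  field_simp
  ring

lemma pd2_Φ {t a b p q A B C D p' q' C' D' : ℝ} (ht : t ≠ 0)
    (hp : p' = q / t) (hq : q' = -(p / t)) (hC : C' = -(π * D)) (hD : D' = π * C) :
    pd2 (Φ t a b p q A B C D) = Φ t a b p' q' A B C' D' := by
  funext y
  have e1 : HasDerivAt (fun s : ℝ => Real.cos (s / t)) (-Real.sin (y.2 / t) * (1 / t)) y.2 := by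
    simpa using ((hasDerivAt_id y.2).div_const t).cos
  have e2 : HasDerivAt (fun s : ℝ => Real.sin (s / t)) (Real.cos (y.2 / t) * (1 / t)) y.2 := by
    simpa using ((hasDerivAt_id y.2).div_const t).sin
  have e3 : HasDerivAt (fun s : ℝ => Real.sin (π * s)) (Real.cos (π * y.2) * π) y.2 := by
    simpa using ((hasDerivAt_id y.2).const_mul π).sin
  have e4 : HasDerivAt (fun s : ℝ => Real.cos (π * s)) (-Real.sin (π * y.2) * π) y.2 := by
    simpa using ((hasDerivAt_id y.2).const_mul π).cos
  have h : HasDerivAt (fun s : ℝ =>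
      (a + b * y.1) * Real.exp (-(y.1 / t)) *
        (p * Real.cos (s / t) + q * Real.sin (s / t)) +
      (A * Real.sin (π * y.1) + B * Real.cos (π * y.1)) *
        (C * Real.sin (π * s) + D * Real.cos (π * s)))
      ((a + b * y.1) * Real.exp (-(y.1 / t)) *
        (p * (-Real.sin (y.2 / t) * (1 / t)) + q * (Real.cos (y.2 / t) * (1 / t))) +
       (A * Real.sin (π * y.1) + B * Real.cos (π * y.1)) *
        (C * (Real.cos (π * y.2) * π) + D * (-Real.sin (π * y.2) * π))) y.2 :=
    (((e1.const_mul p).add (e2.const_mul q)).const_mul _).add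
      (((e3.const_mul C).add (e4.const_mul D)).const_mul _)
  simp only [pd2, Φ]
  rw [h.deriv]
  subst hp hq hC hD
  field_simp
  ring

set_option maxHeartbeats 2000000 in
/-- The constructed fields solve the Reissner–Mindlin system at every
`x ∈ ℝ²`: (i) `γ_t = κ ∇ w_t`; (ii) `γ_t + div(C ∇_s θ_t) = 0` with
`C 𝐭 = β₀ 𝐭 + β₁ (tr 𝐭) I` and row-wise divergence; (iii)
`f_t(x) = (β₀+β₁) Δ²g(x) = 4π⁴ (β₀+β₁) g(x)` — in particular `f_t` is independent
of `t`. -/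
theorem stmt_7 (β₀ β₁ κ t : ℝ) (hβ₀ : 0 < β₀) (hβ₁ : 0 < β₁) (hκ : 0 < κ) (ht : 0 < t)
    (x : ℝ × ℝ) :
    -- (i)  γ_t = κ ∇ w_t
    (gam1 β₀ β₁ κ t x = κ * pd1 (wt β₀ β₁ κ t) x ∧
      gam2 β₀ β₁ κ t x = κ * pd2 (wt β₀ β₁ κ t) x) ∧
    -- (ii) γ_t + div (C ∇_s θ_t) = 0
    (let S11 : ℝ × ℝ → ℝ := pd1 (θ1 t)
     let S12 : ℝ × ℝ → ℝ := fun y => (pd2 (θ1 t) y + pd1 (θ2 t) y) / 2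
     let S22 : ℝ × ℝ → ℝ := pd2 (θ2 t)
     let CS11 : ℝ × ℝ → ℝ := fun y => β₀ * S11 y + β₁ * (S11 y + S22 y)
     let CS12 : ℝ × ℝ → ℝ := fun y => β₀ * S12 y
     let CS22 : ℝ × ℝ → ℝ := fun y => β₀ * S22 y + β₁ * (S11 y + S22 y)
     gam1 β₀ β₁ κ t x + (pd1 CS11 x + pd2 CS12 x) = 0 ∧
       gam2 β₀ β₁ κ t x + (pd1 CS12 x + pd2 CS22 x) = 0) ∧
    -- (iii) f_t = (β₀+β₁) Δ²g = 4π⁴(β₀+β₁) g, independent of t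
    (ft β₀ β₁ κ t x = (β₀ + β₁) * lap (lap g) x ∧
      ft β₀ β₁ κ t x = 4 * π ^ 4 * (β₀ + β₁) * g x) := by
  have ht' : t ≠ 0 := ne_of_gt ht
  have hκ' : κ ≠ 0 := ne_of_gt hκ
  -- closed form of vt
  have hvt : vt t = Φ t 0 (t ^ 2) 1 0 1 0 1 0 := by
    funext y; simp only [vt, V, g, Φ]; field_simp; ring
  -- derivatives of the Φ forms
  have P1 : pd1 (Φ t 0 (t ^ 2) 1 0 1 0 1 0) = Φ t (t ^ 2) (-t) 1 0 0 π 1 0 :=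
    pd1_Φ ht' (by field_simp <;> ring) (by field_simp <;> ring) (by ring) (by ring)
  have P2 : pd2 (Φ t 0 (t ^ 2) 1 0 1 0 1 0) = Φ t 0 (t ^ 2) 0 (-(1 / t)) 1 0 0 π :=
    pd2_Φ ht' (by field_simp <;> ring) (by field_simp <;> ring) (by ring) (by ring)
  have P3 : pd1 (Φ t (t ^ 2) (-t) 1 0 0 π 1 0) = Φ t (-(2 * t)) 1 1 0 (-π ^ 2) 0 1 0 :=
    pd1_Φ ht' (by field_simp <;> ring) (by field_simp <;> ring) (by ring) (by ring)
  have P4 : pd2 (Φ t (t ^ 2) (-t) 1 0 0 π 1 0) = Φ t (t ^ 2) (-t) 0 (-(1 / t)) 0 π 0 π :=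
    pd2_Φ ht' (by field_simp <;> ring) (by field_simp <;> ring) (by ring) (by ring)
  have P5 : pd1 (Φ t 0 (t ^ 2) 0 (-(1 / t)) 1 0 0 π) = Φ t (t ^ 2) (-t) 0 (-(1 / t)) 0 π 0 π :=
    pd1_Φ ht' (by field_simp <;> ring) (by field_simp <;> ring) (by ring) (by ring)
  have P6 : pd2 (Φ t 0 (t ^ 2) 0 (-(1 / t)) 1 0 0 π) = Φ t 0 (t ^ 2) (-(1 / t ^ 2)) 0 1 0 (-π ^ 2) 0 :=
    pd2_Φ ht' (by field_simp <;> ring) (by field_simp <;> ring) (by ring) (by ring)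
  -- θ
  have hθ1 : θ1 t = Φ t (t ^ 2) (-t) 1 0 0 π 1 0 := by
    simp only [θ1]; rw [hvt, P1]
  have hθ2 : θ2 t = Φ t 0 (t ^ 2) 0 (-(1 / t)) 1 0 0 π := by
    simp only [θ2]; rw [hvt, P2]
  -- wt
  have hwt : wt β₀ β₁ κ t
      = Φ t (2 * ((β₀ + β₁) / κ) * t) 0 1 0 (2 * ((β₀ + β₁) / κ) * π ^ 2) 0 1 0 := by
    funext y
    simp only [wt, lap]
    rw [hvt, P1, P2, P3, P6]
    simp only [Φ]; field_simp; ring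
  have Pwt1 : pd1 (Φ t (2 * ((β₀ + β₁) / κ) * t) 0 1 0 (2 * ((β₀ + β₁) / κ) * π ^ 2) 0 1 0)
      = Φ t (-(2 * ((β₀ + β₁) / κ))) 0 1 0 0 (2 * ((β₀ + β₁) / κ) * π ^ 3) 1 0 :=
    pd1_Φ ht' (by field_simp <;> ring) (by field_simp <;> ring) (by ring) (by ring)
  have Pwt2 : pd2 (Φ t (2 * ((β₀ + β₁) / κ) * t) 0 1 0 (2 * ((β₀ + β₁) / κ) * π ^ 2) 0 1 0)
      = Φ t (2 * ((β₀ + β₁) / κ) * t) 0 0 (-(1 / t)) (2 * ((β₀ + β₁) / κ) * π ^ 2) 0 0 π :=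
    pd2_Φ ht' (by field_simp <;> ring) (by field_simp <;> ring) (by ring) (by ring)
  -- ut
  have hut : ut β₀ β₁ κ t
      = Φ t (2 * ((β₀ + β₁) / κ) * t ^ 3) (t ^ 2) 1 0
          (1 + 2 * ((β₀ + β₁) / κ) * π ^ 2 * t ^ 2) 0 1 0 := by
    funext y; simp only [ut]; rw [hvt, hwt]; simp only [Φ]; ring
  have Put1 : pd1 (Φ t (2 * ((β₀ + β₁) / κ) * t ^ 3) (t ^ 2) 1 0
        (1 + 2 * ((β₀ + β₁) / κ) * π ^ 2 * t ^ 2) 0 1 0)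
      = Φ t (t ^ 2 - 2 * ((β₀ + β₁) / κ) * t ^ 2) (-t) 1 0 0
          (π * (1 + 2 * ((β₀ + β₁) / κ) * π ^ 2 * t ^ 2)) 1 0 :=
    pd1_Φ ht' (by field_simp <;> ring) (by field_simp <;> ring) (by ring) (by ring)
  have Put2 : pd2 (Φ t (2 * ((β₀ + β₁) / κ) * t ^ 3) (t ^ 2) 1 0
        (1 + 2 * ((β₀ + β₁) / κ) * π ^ 2 * t ^ 2) 0 1 0)
      = Φ t (2 * ((β₀ + β₁) / κ) * t ^ 3) (t ^ 2) 0 (-(1 / t))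
          (1 + 2 * ((β₀ + β₁) / κ) * π ^ 2 * t ^ 2) 0 0 π :=
    pd2_Φ ht' (by field_simp <;> ring) (by field_simp <;> ring) (by ring) (by ring)
  -- gamma
  have hgam1 : gam1 β₀ β₁ κ t = Φ t (-(2 * (β₀ + β₁))) 0 1 0 0 (2 * (β₀ + β₁) * π ^ 3) 1 0 := by
    funext y; simp only [gam1]; rw [hut, Put1, hθ1]; simp only [Φ]; field_simp; ring
  have hgam2 : gam2 β₀ β₁ κ t
      = Φ t (2 * (β₀ + β₁) * t) 0 0 (-(1 / t)) (2 * (β₀ + β₁) * π ^ 2) 0 0 π := by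
    funext y; simp only [gam2]; rw [hut, Put2, hθ2]; simp only [Φ]; field_simp; ring
  have Pgam1 : pd1 (Φ t (-(2 * (β₀ + β₁))) 0 1 0 0 (2 * (β₀ + β₁) * π ^ 3) 1 0)
      = Φ t (2 * (β₀ + β₁) / t) 0 1 0 (-(2 * (β₀ + β₁) * π ^ 4)) 0 1 0 :=
    pd1_Φ ht' (by field_simp <;> ring) (by field_simp <;> ring) (by ring) (by ring)
  have Pgam2 : pd2 (Φ t (2 * (β₀ + β₁) * t) 0 0 (-(1 / t)) (2 * (β₀ + β₁) * π ^ 2) 0 0 π)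
      = Φ t (2 * (β₀ + β₁) * t) 0 (-(1 / t ^ 2)) 0 (2 * (β₀ + β₁) * π ^ 2) 0 (-π ^ 2) 0 :=
    pd2_Φ ht' (by field_simp <;> ring) (by field_simp <;> ring) (by ring) (by ring)
  -- CS functions
  have hCS11 : (fun y => β₀ * pd1 (θ1 t) y + β₁ * (pd1 (θ1 t) y + pd2 (θ2 t) y))
      = Φ t (-(2 * t * (β₀ + β₁))) β₀ 1 0 (-(π ^ 2 * (β₀ + 2 * β₁))) 0 1 0 := by
    funext y; rw [hθ1, hθ2, P3, P6]; simp only [Φ]; field_simp; ring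
  have hCS12 : (fun y => β₀ * ((pd2 (θ1 t) y + pd1 (θ2 t) y) / 2))
      = Φ t (β₀ * t ^ 2) (-(β₀ * t)) 0 (-(1 / t)) 0 (β₀ * π) 0 π := by
    funext y; rw [hθ1, hθ2, P4, P5]; simp only [Φ]; ring
  have hCS22 : (fun y => β₀ * pd2 (θ2 t) y + β₁ * (pd1 (θ1 t) y + pd2 (θ2 t) y))
      = Φ t (-(2 * t * β₁)) (-β₀) 1 0 (-(π ^ 2 * (β₀ + 2 * β₁))) 0 1 0 := by
    funext y; rw [hθ1, hθ2, P3, P6]; simp only [Φ]; field_simp; ring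
  have PCS11 : pd1 (Φ t (-(2 * t * (β₀ + β₁))) β₀ 1 0 (-(π ^ 2 * (β₀ + 2 * β₁))) 0 1 0)
      = Φ t (β₀ + 2 * (β₀ + β₁)) (-(β₀ / t)) 1 0 0 (-(π ^ 3 * (β₀ + 2 * β₁))) 1 0 :=
    pd1_Φ ht' (by field_simp <;> ring) (by field_simp <;> ring) (by ring) (by ring)
  have PCS12a : pd1 (Φ t (β₀ * t ^ 2) (-(β₀ * t)) 0 (-(1 / t)) 0 (β₀ * π) 0 π)
      = Φ t (-(2 * β₀ * t)) β₀ 0 (-(1 / t)) (-(β₀ * π ^ 2)) 0 0 π :=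
    pd1_Φ ht' (by field_simp <;> ring) (by field_simp <;> ring) (by ring) (by ring)
  have PCS12b : pd2 (Φ t (β₀ * t ^ 2) (-(β₀ * t)) 0 (-(1 / t)) 0 (β₀ * π) 0 π)
      = Φ t (β₀ * t ^ 2) (-(β₀ * t)) (-(1 / t ^ 2)) 0 0 (β₀ * π) (-π ^ 2) 0 :=
    pd2_Φ ht' (by field_simp <;> ring) (by field_simp <;> ring) (by ring) (by ring)
  have PCS22 : pd2 (Φ t (-(2 * t * β₁)) (-β₀) 1 0 (-(π ^ 2 * (β₀ + 2 * β₁))) 0 1 0)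
      = Φ t (-(2 * t * β₁)) (-β₀) 0 (-(1 / t)) (-(π ^ 2 * (β₀ + 2 * β₁))) 0 0 π :=
    pd2_Φ ht' (by field_simp <;> ring) (by field_simp <;> ring) (by ring) (by ring)
  -- g and its bilaplacian
  have hg : g = Φ t 0 0 1 0 1 0 1 0 := by
    funext y; simp only [g, Φ]; ring
  have Pg1 : pd1 (Φ t 0 0 1 0 1 0 1 0) = Φ t 0 0 1 0 0 π 1 0 :=
    pd1_Φ ht' (by field_simp <;> ring) (by field_simp <;> ring) (by ring) (by ring)
  have Pg11 : pd1 (Φ t 0 0 1 0 0 π 1 0) = Φ t 0 0 1 0 (-π ^ 2) 0 1 0 :=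
    pd1_Φ ht' (by field_simp <;> ring) (by field_simp <;> ring) (by ring) (by ring)
  have Pg2 : pd2 (Φ t 0 0 1 0 1 0 1 0) = Φ t 0 0 0 (-(1 / t)) 1 0 0 π :=
    pd2_Φ ht' (by field_simp <;> ring) (by field_simp <;> ring) (by ring) (by ring)
  have Pg22 : pd2 (Φ t 0 0 0 (-(1 / t)) 1 0 0 π) = Φ t 0 0 (-(1 / t ^ 2)) 0 1 0 (-π ^ 2) 0 :=
    pd2_Φ ht' (by field_simp <;> ring) (by field_simp <;> ring) (by ring) (by ring)
  have hlapg : lap g = Φ t 0 0 1 0 (-(2 * π ^ 2)) 0 1 0 := by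
    funext y; simp only [lap]; rw [hg, Pg1, Pg11, Pg2, Pg22]; simp only [Φ]; ring
  have PL1 : pd1 (Φ t 0 0 1 0 (-(2 * π ^ 2)) 0 1 0) = Φ t 0 0 1 0 0 (-(2 * π ^ 3)) 1 0 :=
    pd1_Φ ht' (by field_simp <;> ring) (by field_simp <;> ring) (by ring) (by ring)
  have PL11 : pd1 (Φ t 0 0 1 0 0 (-(2 * π ^ 3)) 1 0) = Φ t 0 0 1 0 (2 * π ^ 4) 0 1 0 :=
    pd1_Φ ht' (by field_simp <;> ring) (by field_simp <;> ring) (by ring) (by ring)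
  have PL2 : pd2 (Φ t 0 0 1 0 (-(2 * π ^ 2)) 0 1 0)
      = Φ t 0 0 0 (-(1 / t)) (-(2 * π ^ 2)) 0 0 π :=
    pd2_Φ ht' (by field_simp <;> ring) (by field_simp <;> ring) (by ring) (by ring)
  have PL22 : pd2 (Φ t 0 0 0 (-(1 / t)) (-(2 * π ^ 2)) 0 0 π)
      = Φ t 0 0 (-(1 / t ^ 2)) 0 (-(2 * π ^ 2)) 0 (-π ^ 2) 0 :=
    pd2_Φ ht' (by field_simp <;> ring) (by field_simp <;> ring) (by ring) (by ring)
  -- the six claims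
  have i1 : gam1 β₀ β₁ κ t x = κ * pd1 (wt β₀ β₁ κ t) x := by
    rw [hgam1, hwt, Pwt1]; simp only [Φ]; field_simp; ring
  have i2 : gam2 β₀ β₁ κ t x = κ * pd2 (wt β₀ β₁ κ t) x := by
    rw [hgam2, hwt, Pwt2]; simp only [Φ]; field_simp; ring
  have ii1 : gam1 β₀ β₁ κ t x +
      (pd1 (fun y => β₀ * pd1 (θ1 t) y + β₁ * (pd1 (θ1 t) y + pd2 (θ2 t) y)) x +
       pd2 (fun y => β₀ * ((pd2 (θ1 t) y + pd1 (θ2 t) y) / 2)) x) = 0 := by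
    rw [hgam1, hCS11, hCS12, PCS11, PCS12b]; simp only [Φ]; field_simp; ring
  have ii2 : gam2 β₀ β₁ κ t x +
      (pd1 (fun y => β₀ * ((pd2 (θ1 t) y + pd1 (θ2 t) y) / 2)) x +
       pd2 (fun y => β₀ * pd2 (θ2 t) y + β₁ * (pd1 (θ1 t) y + pd2 (θ2 t) y)) x) = 0 := by
    rw [hgam2, hCS12, hCS22, PCS12a, PCS22]; simp only [Φ]; field_simp; ring
  have iii1 : ft β₀ β₁ κ t x = (β₀ + β₁) * lap (lap g) x := by
    simp only [ft, lap]
    rw [hgam1, hgam2, Pgam1, Pgam2, hlapg, PL1, PL11, PL2, PL22]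
    simp only [Φ]; field_simp; ring
  have iii2 : ft β₀ β₁ κ t x = 4 * π ^ 4 * (β₀ + β₁) * g x := by
    simp only [ft]
    rw [hgam1, hgam2, Pgam1, Pgam2]
    simp only [Φ, g]; field_simp; ring
  exact ⟨⟨i1, i2⟩, ⟨ii1, ii2⟩, iii1, iii2⟩

end
end

section
/- Let t > 0 and a, b ∈ ℕ with s = a + b, and define the vector field F_t : ℝ² → ℝ² by F_t(x₁, x₂) = e^{−x₁/t} (cos(x₂/t), sin(x₂/t)). Then the sum over the two components i = 1, 2 of ∫_{(0,1)²} |∂₁^a ∂₂^b (F_t)_i(x)|² dx equals t^{−2s} · (t/2)(1 − e^{−2/t}). -/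
noncomputable section

open MeasureTheory

/-- The open unit square `(0,1)² ⊂ ℝ²`. -/
def usq : Set (ℝ × ℝ) := Set.Ioo (0 : ℝ) 1 ×ˢ Set.Ioo (0 : ℝ) 1

/-- First component of `F_t(x) = e^{−x₁/t} (cos(x₂/t), sin(x₂/t))`. -/
def F1 (t : ℝ) : ℝ × ℝ → ℝ := fun x => Real.exp (-x.1 / t) * Real.cos (x.2 / t)

/-- Second component of `F_t(x) = e^{−x₁/t} (cos(x₂/t), sin(x₂/t))`. -/
def F2 (t : ℝ) : ℝ × ℝ → ℝ := fun x => Real.exp (-x.1 / t) * Real.sin (x.2 / t)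

/-!
Both components are damped waves `e^{-x₁/t} cos(x₂/t + c)`: `∂₁` multiplies such a wave by
`-1/t`, while `∂₂` multiplies it by `1/t` and advances the phase `c` by `π/2`. Hence
`∂₁^a ∂₂^b (F_t)₁` and `∂₁^a ∂₂^b (F_t)₂` are the same multiple `k` of two waves whose phases differ
by `π/2`, so the sum of their squares is `k² e^{-2x₁/t}` with `k² = t^{-2s}`, and integrating
over the square leaves `∫₀¹ e^{-2x₁/t} dx₁ = (t/2)(1 - e^{-2/t})`.
-/

open Real

def dampedWave (t c : ℝ) (x : ℝ × ℝ) : ℝ := exp (-x.1 / t) * cos (x.2 / t + c)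

lemma F1_eq_dampedWave (t : ℝ) : F1 t = dampedWave t 0 := by
  funext x; simp [F1, dampedWave]

lemma F2_eq_dampedWave (t : ℝ) : F2 t = dampedWave t (-(π / 2)) := by
  funext x; simp only [F2, dampedWave, ← sub_eq_add_neg, cos_sub_pi_div_two]

lemma pd1_const_mul (k : ℝ) (f : ℝ × ℝ → ℝ) :
    pd1 (fun x => k * f x) = fun x => k * pd1 f x := by
  funext p; simp only [pd1, deriv_const_mul_field]

lemma pd2_const_mul (k : ℝ) (f : ℝ × ℝ → ℝ) :
    pd2 (fun x => k * f x) = fun x => k * pd2 f x := by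
  funext p; simp only [pd2, deriv_const_mul_field]

lemma iterate_pd1_const_mul (k : ℝ) (f : ℝ × ℝ → ℝ) (n : ℕ) :
    pd1^[n] (fun x => k * f x) = fun x => k * pd1^[n] f x := by
  induction n with
  | zero => rfl
  | succ n ih => rw [Function.iterate_succ_apply', ih, pd1_const_mul, Function.iterate_succ_apply']

lemma iterate_pd1_of_pd1_eq_const_mul {f : ℝ × ℝ → ℝ} {k : ℝ}
    (hf : pd1 f = fun x => k * f x) (n : ℕ) : pd1^[n] f = fun x => k ^ n * f x := by
  induction n with
  | zero => simp
  | succ n ih =>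
    rw [Function.iterate_succ_apply', ih, pd1_const_mul, hf]
    funext x; ring

lemma pd1_dampedWave (t c : ℝ) : pd1 (dampedWave t c) = fun x => -t⁻¹ * dampedWave t c x := by
  funext p
  have hd : HasDerivAt (fun s : ℝ => exp (-s / t)) (exp (-p.1 / t) * (-1 / t)) p.1 := by
    simpa [neg_div] using ((hasDerivAt_id p.1).neg.div_const t).exp
  simp only [pd1, dampedWave]
  rw [deriv_mul_const hd.differentiableAt, hd.deriv]
  ring

lemma pd2_dampedWave (t c : ℝ) :
    pd2 (dampedWave t c) = fun x => t⁻¹ * dampedWave t (c + π / 2) x := by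
  funext p
  have hd : HasDerivAt (fun s : ℝ => cos (s / t + c)) (-sin (p.2 / t + c) * (1 / t)) p.2 := by
    simpa using (((hasDerivAt_id p.2).div_const t).add_const c).cos
  simp only [pd2, dampedWave]
  rw [deriv_const_mul _ hd.differentiableAt, hd.deriv, ← add_assoc, cos_add_pi_div_two]
  ring

lemma iterate_pd2_dampedWave (t c : ℝ) (n : ℕ) :
    pd2^[n] (dampedWave t c) = fun x => t⁻¹ ^ n * dampedWave t (c + n * (π / 2)) x := by
  induction n with
  | zero => simp
  | succ n ih =>
    rw [Function.iterate_succ_apply', ih, pd2_const_mul, pd2_dampedWave]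
    funext x
    rw [add_assoc, Nat.cast_succ, add_one_mul]
    ring

lemma iterate_pd1_iterate_pd2_dampedWave (t c : ℝ) (a b : ℕ) :
    pd1^[a] (pd2^[b] (dampedWave t c))
      = fun x => (-t⁻¹) ^ a * t⁻¹ ^ b * dampedWave t (c + b * (π / 2)) x := by
  rw [iterate_pd2_dampedWave, iterate_pd1_const_mul,
    iterate_pd1_of_pd1_eq_const_mul (pd1_dampedWave t _)]
  funext x; ring

lemma dampedWave_sq_add_dampedWave_sub_pi_div_two_sq (t c : ℝ) (x : ℝ × ℝ) :
    dampedWave t c x ^ 2 + dampedWave t (c - π / 2) x ^ 2 = exp (-2 / t * x.1) := by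
  have hexp : exp (-x.1 / t) ^ 2 = exp (-2 / t * x.1) := by
    rw [← exp_nat_mul]; ring_nf
  simp only [dampedWave, ← add_sub_assoc, cos_sub_pi_div_two]
  rw [mul_pow, mul_pow, ← mul_add, cos_sq_add_sin_sq, hexp, mul_one]

lemma integrableOn_usq_of_continuous {f : ℝ × ℝ → ℝ} (hf : Continuous f) :
    IntegrableOn f usq := by
  refine (hf.integrableOn_Icc (a := (0, 0)) (b := (1, 1))).mono_set ?_
  rw [usq, ← Set.Icc_prod_Icc]
  exact Set.prod_mono Set.Ioo_subset_Icc_self Set.Ioo_subset_Icc_self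

lemma setIntegral_usq_comp_fst (f : ℝ → ℝ) : ∫ x in usq, f x.1 = ∫ x in (0 : ℝ)..1, f x := by
  rw [usq, Measure.volume_eq_prod, intervalIntegral.integral_of_le zero_le_one,
    integral_Ioc_eq_integral_Ioo]
  simpa using setIntegral_prod_mul (μ := volume) (ν := volume) f (fun _ => (1 : ℝ))
    (Set.Ioo (0 : ℝ) 1) (Set.Ioo (0 : ℝ) 1)

lemma integral_exp_const_mul_zero_one {c : ℝ} (hc : c ≠ 0) :
    ∫ x in (0 : ℝ)..1, exp (c * x) = (exp c - 1) / c := by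
  simp [intervalIntegral.integral_comp_mul_left _ hc, div_eq_inv_mul]

/-- For `t > 0` and `a, b ∈ ℕ` with `s = a + b`,
`Σ_{i=1,2} ∫_{(0,1)²} |∂₁^a ∂₂^b (F_t)_i|² = t^{−2s} · (t/2)(1 − e^{−2/t})`. -/
theorem stmt_8 (t : ℝ) (ht : 0 < t) (a b : ℕ) :
    (∫ x in usq, (pd1^[a] (pd2^[b] (F1 t)) x) ^ 2)
      + (∫ x in usq, (pd1^[a] (pd2^[b] (F2 t)) x) ^ 2)
      = (t ^ (2 * (a + b)))⁻¹ * (t / 2 * (1 - Real.exp (-2 / t))) := by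
  set k := (-t⁻¹) ^ a * t⁻¹ ^ b
  have h1 : pd1^[a] (pd2^[b] (F1 t)) = fun x => k * dampedWave t (b * (π / 2)) x := by
    rw [F1_eq_dampedWave, iterate_pd1_iterate_pd2_dampedWave, zero_add]
  have h2 : pd1^[a] (pd2^[b] (F2 t)) = fun x => k * dampedWave t (b * (π / 2) - π / 2) x := by
    rw [F2_eq_dampedWave, iterate_pd1_iterate_pd2_dampedWave, neg_add_eq_sub]
  have hk : k ^ 2 = (t ^ (2 * (a + b)))⁻¹ := by
    rw [mul_pow, ← pow_mul, ← pow_mul, Even.neg_pow ⟨a, by ring⟩, ← pow_add, inv_pow]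
    ring_nf
  have hcont : ∀ c, Continuous fun x => (k * dampedWave t c x) ^ 2 := fun c => by
    unfold dampedWave; fun_prop
  rw [h1, h2, ← integral_add (integrableOn_usq_of_continuous (hcont _))
    (integrableOn_usq_of_continuous (hcont _))]
  simp_rw [mul_pow, ← mul_add, dampedWave_sq_add_dampedWave_sub_pi_div_two_sq, hk]
  rw [integral_const_mul, setIntegral_usq_comp_fst (fun y => exp (-2 / t * y)),
    integral_exp_const_mul_zero_one (by positivity)]
  field_simp
  ring

end
end

section
/- Let β₀, β₁, κ > 0 and for t > 0 define the rotation θ_t := ∇ v_t, where v_t(x) = t³ V(x/t) + g(x), V(y₁,y₂) = y₁ e^{−y₁} cos(y₂) and g(x₁,x₂) = sin(πx₁) sin(πx₂). Then θ_t converges to ∇g in H² of the unit square as t → 0⁺: for every pair (a, b) of natural numbers with a + b ≤ 2 and each component i = 1, 2, lim_{t → 0⁺} ∫_{(0,1)²} |∂₁^a ∂₂^b ((θ_t)_i − ∂ᵢ g)(x)|² dx = 0. In particular the H² norm of θ_t on (0,1)² remains bounded, and bounded away from zero, as t → 0⁺. -/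
/-!
Both `t³ V(x/t)` and `g` are separated products `f(x₁) h(x₂)`, so their mixed partials are
separated products of one-variable derivatives. Each derivative of the boundary layer costs a
factor `t⁻¹`: with `P(u) = u e^{−u}`, whose derivatives are `P⁽ⁿ⁾(u) = (−1)ⁿ (u − n) e^{−u}`,
`∂₁^a ∂₂^b (t³ V(x/t)) = t^{3−a−b} P⁽ᵃ⁾(x₁/t) cos⁽ᵇ⁾(x₂/t)`. For `a + b ≤ 3` and `t ≤ 1` its square
is at most `26 e^{−x₁/t}`, whose integral over the square is at most `26 t`. As `θ_t − ∇g` is the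
gradient of the boundary layer, this gives the convergence; together with `|∂^α ∇g| ≤ π³` it also
bounds the `H²` norm of `θ_t`. From below, `‖∂₁g‖² = π²/4`, so `‖(θ_t)₁‖² ≥ π²/8 − 26 t`.
-/

noncomputable section

open Real MeasureTheory Filter

open scoped ContDiff Topology

def sepProd (f h : ℝ → ℝ) : ℝ × ℝ → ℝ := fun y => f y.1 * h y.2

section SepProd

variable {f₁ f₂ h₁ h₂ : ℝ → ℝ}

lemma pd1_sepProd (f h : ℝ → ℝ) : pd1 (sepProd f h) = sepProd (deriv f) h := by
  funext y
  exact congrFun (deriv_mul_const_field' (h y.2)) y.1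

lemma pd2_sepProd (f h : ℝ → ℝ) : pd2 (sepProd f h) = sepProd f (deriv h) := by
  funext y
  exact congrFun (deriv_const_mul_field' (f y.1)) y.2

lemma iterate_pd_sepProd (f h : ℝ → ℝ) (a b : ℕ) :
    pd1^[a] (pd2^[b] (sepProd f h)) = sepProd (iteratedDeriv a f) (iteratedDeriv b h) := by
  have h2 : ∀ b, pd2^[b] (sepProd f h) = sepProd f (iteratedDeriv b h) := by
    intro b
    induction b with
    | zero => simp
    | succ b ih => rw [Function.iterate_succ_apply', ih, pd2_sepProd, iteratedDeriv_succ]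
  induction a with
  | zero => simp [h2]
  | succ a ih => rw [Function.iterate_succ_apply', ih, pd1_sepProd, iteratedDeriv_succ]

lemma pd1_sepProd_add (hf₁ : Differentiable ℝ f₁) (hf₂ : Differentiable ℝ f₂) :
    pd1 (sepProd f₁ h₁ + sepProd f₂ h₂) = sepProd (deriv f₁) h₁ + sepProd (deriv f₂) h₂ := by
  funext y
  exact (((hf₁ y.1).hasDerivAt.mul_const (h₁ y.2)).add
    ((hf₂ y.1).hasDerivAt.mul_const (h₂ y.2))).deriv

lemma pd2_sepProd_add (hh₁ : Differentiable ℝ h₁) (hh₂ : Differentiable ℝ h₂) :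
    pd2 (sepProd f₁ h₁ + sepProd f₂ h₂) = sepProd f₁ (deriv h₁) + sepProd f₂ (deriv h₂) := by
  funext y
  exact (((hh₁ y.2).hasDerivAt.const_mul (f₁ y.1)).add
    ((hh₂ y.2).hasDerivAt.const_mul (f₂ y.1))).deriv

lemma differentiable_iteratedDeriv_of_contDiff {f : ℝ → ℝ} (hf : ContDiff ℝ ∞ f) (n : ℕ) :
    Differentiable ℝ (iteratedDeriv n f) :=
  hf.differentiable_iteratedDeriv n (by exact_mod_cast ENat.natCast_lt_top n)

lemma iterate_pd_sepProd_add (hf₁ : ContDiff ℝ ∞ f₁) (hf₂ : ContDiff ℝ ∞ f₂)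
    (hh₁ : ContDiff ℝ ∞ h₁) (hh₂ : ContDiff ℝ ∞ h₂) (a b : ℕ) :
    pd1^[a] (pd2^[b] (sepProd f₁ h₁ + sepProd f₂ h₂)) =
      sepProd (iteratedDeriv a f₁) (iteratedDeriv b h₁) +
        sepProd (iteratedDeriv a f₂) (iteratedDeriv b h₂) := by
  have h2 : ∀ b, pd2^[b] (sepProd f₁ h₁ + sepProd f₂ h₂) =
      sepProd f₁ (iteratedDeriv b h₁) + sepProd f₂ (iteratedDeriv b h₂) := by
    intro b
    induction b with
    | zero => simp
    | succ b ih =>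
      rw [Function.iterate_succ_apply', ih, pd2_sepProd_add
        (differentiable_iteratedDeriv_of_contDiff hh₁ b)
        (differentiable_iteratedDeriv_of_contDiff hh₂ b), iteratedDeriv_succ, iteratedDeriv_succ]
  induction a with
  | zero => simp [h2]
  | succ a ih =>
    rw [Function.iterate_succ_apply', ih, pd1_sepProd_add
      (differentiable_iteratedDeriv_of_contDiff hf₁ a)
      (differentiable_iteratedDeriv_of_contDiff hf₂ a), iteratedDeriv_succ, iteratedDeriv_succ]

lemma continuous_sepProd {f h : ℝ → ℝ} (hf : Continuous f) (hh : Continuous h) :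
    Continuous (sepProd f h) :=
  (hf.comp continuous_fst).mul (hh.comp continuous_snd)

end SepProd

lemma setIntegral_sq_add_ge {α : Type*} [MeasurableSpace α] {μ : Measure α} {s : Set α}
    (hs : MeasurableSet s) {F G : α → ℝ} (hF : IntegrableOn (fun y => F y ^ 2) s μ)
    (hG : IntegrableOn (fun y => G y ^ 2) s μ)
    (hFG : IntegrableOn (fun y => (F y + G y) ^ 2) s μ) :
    (∫ y in s, F y ^ 2 ∂μ) / 2 - ∫ y in s, G y ^ 2 ∂μ ≤ ∫ y in s, (F y + G y) ^ 2 ∂μ := by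
  rw [← integral_div, ← integral_sub (hF.div_const 2) hG]
  refine setIntegral_mono_on ((hF.div_const 2).sub hG) hFG hs fun y _ => ?_
  nlinarith [sq_nonneg (F y + 2 * G y)]

lemma sum_range_three_range_sub_bounds {F : ℕ → ℕ → ℝ} {m M : ℝ}
    (hF : ∀ a b, a + b ≤ 2 → 0 ≤ F a b ∧ F a b ≤ M) (hm : m ≤ F 0 0) :
    m ≤ ∑ a ∈ Finset.range 3, ∑ b ∈ Finset.range (3 - a), F a b ∧
      ∑ a ∈ Finset.range 3, ∑ b ∈ Finset.range (3 - a), F a b ≤ 6 * M := by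
  simp only [Finset.sum_range_succ, Finset.sum_range_zero, Nat.reduceSub, zero_add]
  obtain ⟨h00, h00'⟩ := hF 0 0 (by norm_num)
  obtain ⟨h01, h01'⟩ := hF 0 1 (by norm_num)
  obtain ⟨h02, h02'⟩ := hF 0 2 (by norm_num)
  obtain ⟨h10, h10'⟩ := hF 1 0 (by norm_num)
  obtain ⟨h11, h11'⟩ := hF 1 1 (by norm_num)
  obtain ⟨h20, h20'⟩ := hF 2 0 (by norm_num)
  constructor <;> linarith

section UnitSquare

lemma measurableSet_usq : MeasurableSet usq := measurableSet_Ioo.prod measurableSet_Ioo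

lemma volume_usq : volume usq = 1 := by
  simp [usq, Measure.volume_eq_prod, Measure.prod_prod]

lemma setIntegral_usq_sq_nonneg (F : ℝ × ℝ → ℝ) : 0 ≤ ∫ y in usq, F y ^ 2 :=
  setIntegral_nonneg measurableSet_usq fun _ _ => sq_nonneg _

lemma integrableOn_usq {F : ℝ × ℝ → ℝ} (hF : Continuous F) : IntegrableOn F usq := by
  refine (hF.integrableOn_Icc (a := (0, 0)) (b := (1, 1))).mono_set ?_
  rw [← Set.Icc_prod_Icc]
  exact Set.prod_mono Set.Ioo_subset_Icc_self Set.Ioo_subset_Icc_self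

lemma setIntegral_usq_sepProd (f h : ℝ → ℝ) :
    ∫ y in usq, sepProd f h y = (∫ x in Set.Ioo 0 1, f x) * ∫ x in Set.Ioo 0 1, h x := by
  rw [usq, Measure.volume_eq_prod]
  exact setIntegral_prod_mul f h _ _

end UnitSquare

def layerProfile : ℝ → ℝ := fun u => u * exp (-u)

def layerFactor (t : ℝ) : ℝ → ℝ := fun s => t ^ 3 * layerProfile (t⁻¹ * s)

def oscFactor (t : ℝ) : ℝ → ℝ := fun s => cos (t⁻¹ * s)

def sinPi : ℝ → ℝ := fun s => sin (π * s)

def corrector (t : ℝ) : ℝ × ℝ → ℝ := sepProd (layerFactor t) (oscFactor t)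

lemma contDiff_layerProfile : ContDiff ℝ ∞ layerProfile := by
  unfold layerProfile; fun_prop

lemma contDiff_layerFactor (t : ℝ) : ContDiff ℝ ∞ (layerFactor t) := by
  unfold layerFactor layerProfile; fun_prop

lemma contDiff_oscFactor (t : ℝ) : ContDiff ℝ ∞ (oscFactor t) := by
  unfold oscFactor; fun_prop

lemma contDiff_sinPi : ContDiff ℝ ∞ sinPi := by
  unfold sinPi; fun_prop

lemma iteratedDeriv_layerProfile (n : ℕ) (u : ℝ) :
    iteratedDeriv n layerProfile u = (-1) ^ n * ((u - n) * exp (-u)) := by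
  induction n generalizing u with
  | zero => simp [layerProfile]
  | succ n ih =>
    rw [iteratedDeriv_succ, funext ih]
    have h : HasDerivAt (fun x => (-1) ^ n * ((x - n) * exp (-x)))
        ((-1) ^ n * (1 * exp (-u) + (u - n) * (exp (-u) * -1))) u :=
      (((hasDerivAt_id u).sub_const _).mul (hasDerivAt_neg u).exp).const_mul _
    rw [h.deriv]
    push_cast
    ring

lemma iteratedDeriv_layerFactor (t : ℝ) (n : ℕ) (s : ℝ) :
    iteratedDeriv n (layerFactor t) s =
      t ^ 3 * (t⁻¹ ^ n * iteratedDeriv n layerProfile (t⁻¹ * s)) := by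
  unfold layerFactor
  rw [iteratedDeriv_const_mul_field,
    iteratedDeriv_comp_const_mul (contDiff_infty.1 contDiff_layerProfile n)]

lemma iteratedDeriv_oscFactor (t : ℝ) (n : ℕ) (s : ℝ) :
    iteratedDeriv n (oscFactor t) s = t⁻¹ ^ n * iteratedDeriv n cos (t⁻¹ * s) := by
  unfold oscFactor
  rw [iteratedDeriv_comp_const_mul contDiff_cos]

lemma iteratedDeriv_sinPi (n : ℕ) (s : ℝ) :
    iteratedDeriv n sinPi s = π ^ n * iteratedDeriv n sin (π * s) := by
  unfold sinPi
  rw [iteratedDeriv_comp_const_mul contDiff_sin]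

lemma sq_iteratedDeriv_layerProfile_le (n : ℕ) {u : ℝ} (hu : 0 ≤ u) :
    (iteratedDeriv n layerProfile u) ^ 2 ≤ (2 * n ^ 2 + 8) * exp (-u) := by
  have hquad : u ^ 2 ≤ 4 * exp u := by
    have hsq : (u / 2 + 1) ^ 2 ≤ exp (u / 2) ^ 2 :=
      pow_le_pow_left₀ (by linarith) (add_one_le_exp (u / 2)) 2
    rw [← exp_nat_mul, show ((2 : ℕ) : ℝ) * (u / 2) = u by push_cast; ring] at hsq
    nlinarith
  have hpoly : (u - n) ^ 2 ≤ (2 * n ^ 2 + 8) * exp u := by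
    nlinarith [one_le_exp hu, sq_nonneg (u + n)]
  have hexp : exp u * exp (-u) = 1 := by rw [← exp_add, add_neg_cancel, exp_zero]
  calc (iteratedDeriv n layerProfile u) ^ 2 = (u - n) ^ 2 * exp (-u) * exp (-u) := by
        rw [iteratedDeriv_layerProfile, mul_pow, ← pow_mul, pow_mul', neg_one_sq, one_pow]
        ring
    _ ≤ (2 * n ^ 2 + 8) * exp u * exp (-u) * exp (-u) := by gcongr
    _ = (2 * n ^ 2 + 8) * exp (-u) := by rw [mul_assoc _ (exp u), hexp, mul_one]

lemma vt_eq (t : ℝ) : vt t = corrector t + sepProd sinPi sinPi := by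
  funext x
  simp only [vt, V, g, corrector, sepProd, layerFactor, oscFactor, layerProfile, sinPi,
    Pi.add_apply, div_eq_inv_mul]
  ring

lemma g_eq : g = sepProd sinPi sinPi := rfl

lemma iterate_pd_corrector (t : ℝ) (a b : ℕ) :
    pd1^[a] (pd2^[b] (corrector t)) =
      sepProd (iteratedDeriv a (layerFactor t)) (iteratedDeriv b (oscFactor t)) :=
  iterate_pd_sepProd _ _ a b

lemma iterate_pd_g (a b : ℕ) :
    pd1^[a] (pd2^[b] g) = sepProd (iteratedDeriv a sinPi) (iteratedDeriv b sinPi) :=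
  iterate_pd_sepProd sinPi sinPi a b

lemma θ1_eq (t : ℝ) :
    θ1 t = sepProd (deriv (layerFactor t)) (oscFactor t) + sepProd (deriv sinPi) sinPi := by
  rw [θ1, vt_eq, corrector, pd1_sepProd_add ((contDiff_layerFactor t).differentiable (by simp))
    (contDiff_sinPi.differentiable (by simp))]

lemma θ2_eq (t : ℝ) :
    θ2 t = sepProd (layerFactor t) (deriv (oscFactor t)) + sepProd sinPi (deriv sinPi) := by
  rw [θ2, vt_eq, corrector, pd2_sepProd_add ((contDiff_oscFactor t).differentiable (by simp))
    (contDiff_sinPi.differentiable (by simp))]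

lemma iterate_pd_θ1_sub_pd1_g (t : ℝ) (a b : ℕ) :
    pd1^[a] (pd2^[b] (fun y => θ1 t y - pd1 g y)) = pd1^[a + 1] (pd2^[b] (corrector t)) := by
  have hdiff : (fun y => θ1 t y - pd1 g y) = sepProd (deriv (layerFactor t)) (oscFactor t) := by
    funext y
    simp [θ1_eq, g_eq, pd1_sepProd]
  rw [hdiff, iterate_pd_sepProd, iterate_pd_corrector, iteratedDeriv_succ']

lemma iterate_pd_θ2_sub_pd2_g (t : ℝ) (a b : ℕ) :
    pd1^[a] (pd2^[b] (fun y => θ2 t y - pd2 g y)) = pd1^[a] (pd2^[b + 1] (corrector t)) := by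
  have hdiff : (fun y => θ2 t y - pd2 g y) = sepProd (layerFactor t) (deriv (oscFactor t)) := by
    funext y
    simp [θ2_eq, g_eq, pd2_sepProd]
  rw [hdiff, iterate_pd_sepProd, iterate_pd_corrector, iteratedDeriv_succ']

lemma iterate_pd_θ1 (t : ℝ) (a b : ℕ) :
    pd1^[a] (pd2^[b] (θ1 t)) =
      pd1^[a + 1] (pd2^[b] (corrector t)) + pd1^[a + 1] (pd2^[b] g) := by
  rw [θ1_eq, iterate_pd_sepProd_add (contDiff_infty_iff_deriv.1 (contDiff_layerFactor t)).2
    (contDiff_infty_iff_deriv.1 contDiff_sinPi).2 (contDiff_oscFactor t) contDiff_sinPi,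
    iterate_pd_corrector, iterate_pd_g, iteratedDeriv_succ', iteratedDeriv_succ']

lemma iterate_pd_θ2 (t : ℝ) (a b : ℕ) :
    pd1^[a] (pd2^[b] (θ2 t)) =
      pd1^[a] (pd2^[b + 1] (corrector t)) + pd1^[a] (pd2^[b + 1] g) := by
  rw [θ2_eq, iterate_pd_sepProd_add (contDiff_layerFactor t) contDiff_sinPi
    (contDiff_infty_iff_deriv.1 (contDiff_oscFactor t)).2
    (contDiff_infty_iff_deriv.1 contDiff_sinPi).2,
    iterate_pd_corrector, iterate_pd_g, iteratedDeriv_succ', iteratedDeriv_succ']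

section Estimates

variable {t : ℝ} {a b : ℕ}

lemma sq_iterate_pd_corrector_le (ht : 0 < t) (ht1 : t ≤ 1) (hab : a + b ≤ 3) {y : ℝ × ℝ}
    (hy : 0 ≤ y.1) : (pd1^[a] (pd2^[b] (corrector t)) y) ^ 2 ≤ 26 * exp (-t⁻¹ * y.1) := by
  obtain ⟨c, hc⟩ := Nat.exists_eq_add_of_le hab
  have hscale : t ^ 3 * t⁻¹ ^ a * t⁻¹ ^ b = t ^ c := by
    rw [hc, pow_add, pow_add, inv_pow, inv_pow]
    field_simp
  have hlayer := sq_iteratedDeriv_layerProfile_le a (u := t⁻¹ * y.1) (by positivity)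
  have hosc : (iteratedDeriv b cos (t⁻¹ * y.2)) ^ 2 ≤ 1 :=
    (sq_le_one_iff_abs_le_one _).2 (abs_iteratedDeriv_cos_le_one b _)
  have htc : (t ^ c) ^ 2 ≤ 1 := pow_le_one₀ (by positivity) (pow_le_one₀ ht.le ht1)
  have ha : 2 * (a : ℝ) ^ 2 + 8 ≤ 26 := by
    have : (a : ℝ) ≤ 3 := by exact_mod_cast (by omega : a ≤ 3)
    nlinarith
  rw [iterate_pd_corrector, sepProd, iteratedDeriv_layerFactor, iteratedDeriv_oscFactor, neg_mul]
  calc (t ^ 3 * (t⁻¹ ^ a * iteratedDeriv a layerProfile (t⁻¹ * y.1)) *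
        (t⁻¹ ^ b * iteratedDeriv b cos (t⁻¹ * y.2))) ^ 2
      = (t ^ c) ^ 2 * (iteratedDeriv a layerProfile (t⁻¹ * y.1)) ^ 2 *
          (iteratedDeriv b cos (t⁻¹ * y.2)) ^ 2 := by rw [← hscale]; ring
    _ ≤ 1 * ((2 * a ^ 2 + 8) * exp (-(t⁻¹ * y.1))) * 1 := by gcongr
    _ ≤ 26 * exp (-(t⁻¹ * y.1)) := by rw [one_mul, mul_one]; gcongr

lemma sq_iterate_pd_g_le (hab : a + b ≤ 3) (y : ℝ × ℝ) :
    (pd1^[a] (pd2^[b] g) y) ^ 2 ≤ π ^ 6 := by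
  have hsin : ∀ n x, (iteratedDeriv n sin x) ^ 2 ≤ 1 := fun n x =>
    (sq_le_one_iff_abs_le_one _).2 (abs_iteratedDeriv_sin_le_one n x)
  have hpow : (π ^ (a + b)) ^ 2 ≤ π ^ 6 := by
    rw [← pow_mul]
    exact pow_le_pow_right₀ (by linarith [pi_gt_three]) (by omega)
  rw [iterate_pd_g, sepProd, iteratedDeriv_sinPi, iteratedDeriv_sinPi]
  calc (π ^ a * iteratedDeriv a sin (π * y.1) * (π ^ b * iteratedDeriv b sin (π * y.2))) ^ 2
      = (π ^ (a + b)) ^ 2 * (iteratedDeriv a sin (π * y.1)) ^ 2 *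
          (iteratedDeriv b sin (π * y.2)) ^ 2 := by ring
    _ ≤ π ^ 6 * 1 * 1 := by gcongr <;> apply hsin
    _ = π ^ 6 := by ring

lemma integral_exp_neg_inv_mul_le (ht : 0 < t) : ∫ s in Set.Ioo 0 1, exp (-t⁻¹ * s) ≤ t := by
  calc ∫ s in Set.Ioo 0 1, exp (-t⁻¹ * s)
      ≤ ∫ s in Set.Ioi 0, exp (-t⁻¹ * s) :=
        setIntegral_mono_set (exp_neg_integrableOn_Ioi 0 (inv_pos.2 ht))
          (Eventually.of_forall fun _ => (exp_pos _).le) Set.Ioo_subset_Ioi_self.eventuallyLE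
    _ = t := by
        rw [integral_exp_mul_Ioi (neg_neg_of_pos (inv_pos.2 ht))]
        simp

lemma integral_sq_iterate_pd_corrector_le (ht : 0 < t) (ht1 : t ≤ 1) (hab : a + b ≤ 3) :
    ∫ y in usq, (pd1^[a] (pd2^[b] (corrector t)) y) ^ 2 ≤ 26 * t := by
  have hbound : (fun y : ℝ × ℝ => 26 * exp (-t⁻¹ * y.1)) =
      sepProd (fun s => 26 * exp (-t⁻¹ * s)) 1 := by
    funext y
    simp [sepProd]
  calc ∫ y in usq, (pd1^[a] (pd2^[b] (corrector t)) y) ^ 2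
      ≤ ∫ y in usq, 26 * exp (-t⁻¹ * y.1) := by
        refine integral_mono_of_nonneg (Eventually.of_forall fun _ => sq_nonneg _)
          (integrableOn_usq (by fun_prop)) ?_
        filter_upwards [ae_restrict_mem measurableSet_usq] with y hy
        exact sq_iterate_pd_corrector_le ht ht1 hab hy.1.1.le
    _ = 26 * ∫ s in Set.Ioo 0 1, exp (-t⁻¹ * s) := by
        rw [hbound, setIntegral_usq_sepProd, integral_const_mul]
        simp
    _ ≤ 26 * t := by gcongr; exact integral_exp_neg_inv_mul_le ht

lemma tendsto_integral_sq_iterate_pd_corrector (hab : a + b ≤ 3) :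
    Tendsto (fun t => ∫ y in usq, (pd1^[a] (pd2^[b] (corrector t)) y) ^ 2) (𝓝[>] 0) (𝓝 0) := by
  have hlin : Tendsto (fun t : ℝ => 26 * t) (𝓝[>] 0) (𝓝 0) := by
    simpa using ((continuous_const_mul (26 : ℝ)).tendsto 0).mono_left nhdsWithin_le_nhds
  refine tendsto_of_tendsto_of_tendsto_of_le_of_le' tendsto_const_nhds hlin
    (Eventually.of_forall fun _ => setIntegral_usq_sq_nonneg _) ?_
  filter_upwards [Ioo_mem_nhdsGT one_pos] with t ht
  exact integral_sq_iterate_pd_corrector_le ht.1 ht.2.le hab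

lemma integral_sq_iterate_pd_add_le (ht : 0 < t) (ht1 : t ≤ 1) (hab : a + b ≤ 3) :
    ∫ y in usq, (pd1^[a] (pd2^[b] (corrector t)) y + pd1^[a] (pd2^[b] g) y) ^ 2 ≤
      52 + 2 * π ^ 6 := by
  have hpt : ∀ y ∈ usq,
      ‖(pd1^[a] (pd2^[b] (corrector t)) y + pd1^[a] (pd2^[b] g) y) ^ 2‖ ≤ 52 + 2 * π ^ 6 := by
    intro y hy
    have hexp : exp (-t⁻¹ * y.1) ≤ 1 :=
      exp_le_one_iff.2 (by nlinarith [inv_pos.2 ht, hy.1.1])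
    have hc := sq_iterate_pd_corrector_le ht ht1 hab hy.1.1.le
    have hg := sq_iterate_pd_g_le hab y
    rw [Real.norm_of_nonneg (sq_nonneg _)]
    nlinarith [sq_nonneg (pd1^[a] (pd2^[b] (corrector t)) y - pd1^[a] (pd2^[b] g) y)]
  have h := norm_setIntegral_le_of_norm_le_const
    (by rw [volume_usq]; exact ENNReal.one_lt_top) hpt
  rw [measureReal_def, volume_usq, ENNReal.toReal_one, mul_one] at h
  exact (le_abs_self _).trans h

lemma integral_sq_iterate_pd_θ1_le (ht : 0 < t) (ht1 : t ≤ 1) (hab : a + b ≤ 2) :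
    ∫ y in usq, (pd1^[a] (pd2^[b] (θ1 t)) y) ^ 2 ≤ 52 + 2 * π ^ 6 := by
  rw [iterate_pd_θ1]
  exact integral_sq_iterate_pd_add_le ht ht1 (by omega)

lemma integral_sq_iterate_pd_θ2_le (ht : 0 < t) (ht1 : t ≤ 1) (hab : a + b ≤ 2) :
    ∫ y in usq, (pd1^[a] (pd2^[b] (θ2 t)) y) ^ 2 ≤ 52 + 2 * π ^ 6 := by
  rw [iterate_pd_θ2]
  exact integral_sq_iterate_pd_add_le ht ht1 (by omega)

lemma integral_sq_sinPi : ∫ x in Set.Ioo 0 1, sinPi x ^ 2 = 1 / 2 := by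
  rw [← integral_Ioc_eq_integral_Ioo, ← intervalIntegral.integral_of_le zero_le_one]
  simp only [sinPi]
  rw [intervalIntegral.integral_comp_mul_left (fun u => sin u ^ 2) pi_ne_zero, integral_sin_sq]
  simp only [mul_zero, mul_one, sin_zero, sin_pi, smul_eq_mul]
  field_simp
  ring

lemma integral_sq_deriv_sinPi : ∫ x in Set.Ioo 0 1, deriv sinPi x ^ 2 = π ^ 2 / 2 := by
  have hderiv : deriv sinPi = fun x => π * cos (π * x) := by
    funext x
    simpa using iteratedDeriv_sinPi 1 x
  simp only [hderiv, mul_pow]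
  rw [← integral_Ioc_eq_integral_Ioo, ← intervalIntegral.integral_of_le zero_le_one,
    intervalIntegral.integral_const_mul,
    intervalIntegral.integral_comp_mul_left (fun u => cos u ^ 2) pi_ne_zero, integral_cos_sq]
  simp only [mul_zero, mul_one, sin_zero, sin_pi, smul_eq_mul]
  field_simp
  ring

lemma integral_sq_pd1_g : ∫ y in usq, pd1 g y ^ 2 = π ^ 2 / 4 := by
  have hsq : (fun y => pd1 g y ^ 2) =
      sepProd (fun x => deriv sinPi x ^ 2) (fun x => sinPi x ^ 2) := by
    funext y
    simp [g_eq, pd1_sepProd, sepProd, mul_pow]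
  rw [hsq, setIntegral_usq_sepProd, integral_sq_deriv_sinPi, integral_sq_sinPi]
  ring

lemma integral_sq_θ1_ge (ht : 0 < t) (ht1 : t ≤ 1) :
    π ^ 2 / 8 - 26 * t ≤ ∫ y in usq, θ1 t y ^ 2 := by
  have hθ : θ1 t = pd1 g + pd1 (corrector t) := by
    simpa [add_comm] using iterate_pd_θ1 t 0 0
  have hg : Continuous (pd1 g) := by
    rw [g_eq, pd1_sepProd]
    exact continuous_sepProd (contDiff_sinPi.continuous_deriv (by simp)) contDiff_sinPi.continuous
  have hc : Continuous (pd1 (corrector t)) := by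
    rw [corrector, pd1_sepProd]
    exact continuous_sepProd ((contDiff_layerFactor t).continuous_deriv (by simp))
      (contDiff_oscFactor t).continuous
  have hlow := setIntegral_sq_add_ge measurableSet_usq
    (integrableOn_usq (hg.pow 2)) (integrableOn_usq (hc.pow 2))
    (integrableOn_usq ((hg.add hc).pow 2))
  have hcorr := integral_sq_iterate_pd_corrector_le (a := 1) (b := 0) ht ht1 (by norm_num)
  simp only [Function.iterate_one, Function.iterate_zero, id] at hcorr
  rw [integral_sq_pd1_g] at hlow
  rw [hθ]
  simp only [Pi.add_apply]
  linarith

end Estimates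

theorem stmt_12_general :
    (∀ a b : ℕ, a + b ≤ 2 →
      Tendsto
        (fun t : ℝ =>
          ∫ x in usq, (pd1^[a] (pd2^[b] (fun y => θ1 t y - pd1 g y)) x) ^ 2)
        (nhdsWithin 0 (Set.Ioi 0)) (nhds 0) ∧
      Tendsto
        (fun t : ℝ =>
          ∫ x in usq, (pd1^[a] (pd2^[b] (fun y => θ2 t y - pd2 g y)) x) ^ 2)
        (nhdsWithin 0 (Set.Ioi 0)) (nhds 0)) ∧
    ∃ c C t₀ : ℝ, 0 < c ∧ 0 < t₀ ∧
      ∀ t : ℝ, 0 < t → t < t₀ →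
        c ≤ (∑ a ∈ Finset.range 3, ∑ b ∈ Finset.range (3 - a),
              ((∫ x in usq, (pd1^[a] (pd2^[b] (θ1 t)) x) ^ 2)
                + (∫ x in usq, (pd1^[a] (pd2^[b] (θ2 t)) x) ^ 2))) ∧
        (∑ a ∈ Finset.range 3, ∑ b ∈ Finset.range (3 - a),
              ((∫ x in usq, (pd1^[a] (pd2^[b] (θ1 t)) x) ^ 2)
                + (∫ x in usq, (pd1^[a] (pd2^[b] (θ2 t)) x) ^ 2))) ≤ C := by
  refine ⟨fun a b hab => ⟨?_, ?_⟩, ?_⟩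
  · simpa only [iterate_pd_θ1_sub_pd1_g] using
      tendsto_integral_sq_iterate_pd_corrector (a := a + 1) (b := b) (by omega)
  · simpa only [iterate_pd_θ2_sub_pd2_g] using
      tendsto_integral_sq_iterate_pd_corrector (a := a) (b := b + 1) (by omega)
  -- `t₀` is chosen so that `26 t ≤ π² / 16` in `integral_sq_θ1_ge`.
  refine ⟨π ^ 2 / 16, 6 * (2 * (52 + 2 * π ^ 6)), π ^ 2 / 416, by positivity, by positivity,
    fun t ht ht₀ => ?_⟩
  have ht1 : t ≤ 1 := by nlinarith [pi_lt_four, pi_pos]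
  refine sum_range_three_range_sub_bounds (fun a b hab => ⟨?_, ?_⟩) ?_
  · exact add_nonneg (setIntegral_usq_sq_nonneg _) (setIntegral_usq_sq_nonneg _)
  · linarith [integral_sq_iterate_pd_θ1_le ht ht1 hab, integral_sq_iterate_pd_θ2_le ht ht1 hab]
  · simp only [Function.iterate_zero, id_eq]
    linarith [integral_sq_θ1_ge ht ht1, setIntegral_usq_sq_nonneg (θ2 t)]

/-- The rotation `θ_t = ∇ v_t` converges to `∇ g` in `H²((0,1)²)` as
`t → 0⁺` (all mixed derivatives of order ≤ 2 of each component of `θ_t − ∇g` tend to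
`0` in `L²`); in particular the `H²` norm of `θ_t` remains bounded, and bounded away
from zero, as `t → 0⁺`. -/
theorem stmt_12 (β₀ β₁ κ : ℝ) (hβ₀ : 0 < β₀) (hβ₁ : 0 < β₁) (hκ : 0 < κ) :
    (∀ a b : ℕ, a + b ≤ 2 →
      Tendsto
        (fun t : ℝ =>
          ∫ x in usq, (pd1^[a] (pd2^[b] (fun y => θ1 t y - pd1 g y)) x) ^ 2)
        (nhdsWithin 0 (Set.Ioi 0)) (nhds 0) ∧
      Tendsto
        (fun t : ℝ =>
          ∫ x in usq, (pd1^[a] (pd2^[b] (fun y => θ2 t y - pd2 g y)) x) ^ 2)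
        (nhdsWithin 0 (Set.Ioi 0)) (nhds 0)) ∧
    ∃ c C t₀ : ℝ, 0 < c ∧ 0 < t₀ ∧
      ∀ t : ℝ, 0 < t → t < t₀ →
        c ≤ (∑ a ∈ Finset.range 3, ∑ b ∈ Finset.range (3 - a),
              ((∫ x in usq, (pd1^[a] (pd2^[b] (θ1 t)) x) ^ 2)
                + (∫ x in usq, (pd1^[a] (pd2^[b] (θ2 t)) x) ^ 2))) ∧
        (∑ a ∈ Finset.range 3, ∑ b ∈ Finset.range (3 - a),
              ((∫ x in usq, (pd1^[a] (pd2^[b] (θ1 t)) x) ^ 2)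
                + (∫ x in usq, (pd1^[a] (pd2^[b] (θ2 t)) x) ^ 2))) ≤ C :=
  stmt_12_general

end
end

section
/- Let τ ⊂ ℝ² be a nondegenerate closed triangle of diameter h, and let e be one of its edges, of length |e| > 0. Then for every affine function w : ℝ² → ℝ, say w(x) = a · x + c with a ∈ ℝ² and c ∈ ℝ, one has ∫_τ w(x)² dx ≤ 2 (|τ|/|e|) ∫_e w² dσ + 2 h² |τ| |a|², where |τ| is the area of τ and ∫_e · dσ denotes the one-dimensional (arclength) integral along the segment e. -/
open MeasureTheory Metric
open scoped NNReal ENNReal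

/-
Compare `w(x)` with its value at a point `y` of the edge: since `w` is `‖a‖`-Lipschitz,
`w(x)² ≤ 2 w(y)² + 2 (‖a‖ |x - y|)² ≤ 2 w(y)² + 2 h² ‖a‖²`. Choosing `y` where `w²` does not
exceed its mean over `e` bounds `w²` on all of `τ` by `2 ⨍_e w² + 2 h² ‖a‖²`; integrating over
`τ` and using `μH[1] e = |e|` gives the claim.
-/

theorem LipschitzWith.sq_le_two_mul_sq_add {X : Type*} [PseudoMetricSpace X] {g : X → ℝ}
    {L : ℝ≥0} (hg : LipschitzWith L g) (x y : X) :
    g x ^ 2 ≤ 2 * g y ^ 2 + 2 * (L * dist x y) ^ 2 := by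
  have hxy : (g x - g y) ^ 2 ≤ (L * dist x y) ^ 2 := by
    rw [← sq_abs, ← Real.dist_eq]
    exact pow_le_pow_left₀ dist_nonneg (hg.dist_le_mul x y) 2
  nlinarith [sq_nonneg (g x - 2 * g y)]

theorem lipschitzWith_inner_add_const {E : Type*} [NormedAddCommGroup E] [InnerProductSpace ℝ E]
    (a : E) (c : ℝ) : LipschitzWith ‖a‖₊ fun x : E => inner ℝ a x + c :=
  LipschitzWith.of_dist_le_mul fun x y => by
    rw [Real.dist_eq, add_sub_add_right_eq_sub, ← inner_sub_right, coe_nnnorm, dist_eq_norm]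
    exact abs_real_inner_le_norm a (x - y)

theorem setIntegral_le_measureReal_mul_of_le {X : Type*} [MeasurableSpace X] {μ : Measure X}
    {s : Set X} {f : X → ℝ} {C : ℝ} (hs : MeasurableSet s) (hμs : μ s ≠ ∞)
    (hf : IntegrableOn f s μ) (hfC : ∀ x ∈ s, f x ≤ C) :
    ∫ x in s, f x ∂μ ≤ μ.real s * C := by
  calc ∫ x in s, f x ∂μ ≤ ∫ _ in s, C ∂μ := setIntegral_mono_on hf (integrableOn_const hμs) hs hfC
    _ = μ.real s * C := by rw [setIntegral_const, smul_eq_mul]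

section Lipschitz

variable {X : Type*} [MetricSpace X] [MeasurableSpace X] [OpensMeasurableSpace X]
  {ν : Measure X} {g : X → ℝ} {L : ℝ≥0} {K e : Set X}

theorem LipschitzWith.sq_le_two_mul_setAverage_add (hg : LipschitzWith L g) (hK : IsCompact K) (he : IsCompact e)
    (heK : e ⊆ K) (hν₀ : ν e ≠ 0) (hν : ν e ≠ ∞) {x : X} (hx : x ∈ K) :
    g x ^ 2 ≤ 2 * ⨍ y in e, g y ^ 2 ∂ν + 2 * (L * diam K) ^ 2 := by
  have hint : IntegrableOn (fun y => g y ^ 2) e ν :=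
    (hg.continuous.pow 2).continuousOn.integrableOn_of_subset_isCompact he he.measurableSet
      subset_rfl hν
  obtain ⟨y, hy, hy_avg⟩ := exists_le_setAverage hν₀ hν hint
  have hdist : dist x y ≤ diam K := dist_le_diam_of_mem hK.isBounded hx (heK hy)
  calc g x ^ 2 ≤ 2 * g y ^ 2 + 2 * (L * dist x y) ^ 2 := hg.sq_le_two_mul_sq_add x y
    _ ≤ 2 * ⨍ y in e, g y ^ 2 ∂ν + 2 * (L * diam K) ^ 2 := by gcongr

theorem LipschitzWith.setIntegral_sq_le (μ : Measure X) [IsFiniteMeasureOnCompacts μ]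
    (hg : LipschitzWith L g) (hK : IsCompact K) (he : IsCompact e) (heK : e ⊆ K)
    (hν₀ : ν e ≠ 0) (hν : ν e ≠ ∞) :
    ∫ x in K, g x ^ 2 ∂μ ≤ μ.real K * (2 * ⨍ y in e, g y ^ 2 ∂ν + 2 * (L * diam K) ^ 2) :=
  setIntegral_le_measureReal_mul_of_le hK.measurableSet hK.measure_ne_top
    ((hg.continuous.pow 2).continuousOn.integrableOn_compact hK)
    fun _ hx => hg.sq_le_two_mul_setAverage_add hK he heK hν₀ hν hx

end Lipschitz

/-- Let `τ ⊂ ℝ²` be a nondegenerate closed triangle (convex hull of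
three non-collinear points `p, q, r`) of diameter `h = diam τ`, and let `e = [p,q]` be
one of its edges (its length `|e| = dist p q` is positive). Then for every affine
function `w(x) = ⟪a, x⟫ + c`,
`∫_τ w² ≤ 2 (|τ|/|e|) ∫_e w² dσ + 2 h² |τ| |a|²`,
where `|τ|` is the area of `τ` and `∫_e ⬝ dσ` is the arclength (1-dimensional
Hausdorff measure) integral along `e`. -/
theorem stmt_13 (p q r : EuclideanSpace ℝ (Fin 2))
    (hpqr : ¬ Collinear ℝ ({p, q, r} : Set (EuclideanSpace ℝ (Fin 2))))
    (a : EuclideanSpace ℝ (Fin 2)) (c : ℝ) :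
    (∫ x in convexHull ℝ ({p, q, r} : Set (EuclideanSpace ℝ (Fin 2))),
        ((inner ℝ a x : ℝ) + c) ^ 2)
      ≤ 2 * ((volume (convexHull ℝ ({p, q, r} : Set (EuclideanSpace ℝ (Fin 2))))).toReal
              / dist p q)
          * (∫ x in segment ℝ p q, ((inner ℝ a x : ℝ) + c) ^ 2 ∂(μH[1]))
        + 2 * (Metric.diam (convexHull ℝ ({p, q, r} : Set (EuclideanSpace ℝ (Fin 2))))) ^ 2
          * (volume (convexHull ℝ ({p, q, r} : Set (EuclideanSpace ℝ (Fin 2))))).toReal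
          * ‖a‖ ^ 2 := by
  have hpq : p ≠ q := by
    rintro rfl
    exact hpqr (by simpa using collinear_pair ℝ p r)
  have hedge : μH[1] (segment ℝ p q) = edist p q := hausdorffMeasure_segment p q
  have hbound := (lipschitzWith_inner_add_const a c).setIntegral_sq_le volume (ν := μH[1])
    (K := convexHull ℝ {p, q, r}) (e := segment ℝ p q)
    ((Set.toFinite _).isCompact_convexHull ℝ)
    (convexHull_pair (𝕜 := ℝ) p q ▸ (Set.toFinite _).isCompact_convexHull ℝ)
    (segment_subset_convexHull (by simp) (by simp))
    (by simpa [hedge] using hpq) (by simp [hedge])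
  rw [setAverage_eq, measureReal_def, measureReal_def, hedge, edist_dist,
    ENNReal.toReal_ofReal dist_nonneg, smul_eq_mul, coe_nnnorm] at hbound
  refine hbound.trans_eq ?_
  ring
end
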